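/- (Optimal low-rank bases in space.) Let x be an element of the tensor space S·Y with coefficient matrix X ∈ ℝ^{q×s}, let M_Y = L_Y L_Yᵀ and M_S = L_S L_Sᵀ with L_Y, L_S invertible, and let V_{q̂} ∈ ℝ^{q×q̂} be a matrix whose columns are q̂ leading left singular vectors of A := L_Yᵀ X L_S (i.e. orthonormal left singular vectors corresponding to the q̂ largest singular values of A). Define Ŷ := span{ν̂_1,…,ν̂_{q̂}} where ν̂_k := Σ_{i=1}^{q} (L_Y^{-ᵀ} V_{q̂})_{ik} ν_i. Then Ŷ is a best-approximating q̂-dimensional subspace of Y = span{ν_1,…,ν_q}: for every subspace W ⊆ Y with dim W = q̂, it holds that ‖x − Π_{S·Ŷ} x‖_{L²((0,T)×Ω)} ≤ ‖x − Π_{S·W} x‖_{L²((0,T)×Ω)}. -/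

import Mathlib

open MeasureTheory Matrix
open scoped BigOperators

/-!
Write `A = L_Yᵀ X L_S`. Since `M_Y = L_Y L_Yᵀ` and `M_S = L_S L_Sᵀ`, the map
`G ↦ L_Yᵀ G L_S` is an isometry from coefficient matrices (with the `L²((0,T)×Ω)` inner product
of the functions they represent) to matrices with the Frobenius inner product. A subspace of `Y`
spanned by the columns of `B` becomes the column space of `P = L_Yᵀ B`, and the projection error
becomes `‖A‖² - tr(Aᵀ Π A)` with `Π = P (PᵀP)⁻¹ Pᵀ`. By Ky Fan's principle, `tr(Aᵀ Π A)` over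
rank-`q̂` orthogonal projections `Π` is maximal for the span of `q̂` leading left singular vectors:
in the eigenbasis of `A Aᵀ`, `Π` has diagonal entries in `[0,1]` summing to `q̂`, so they weight the
decreasing squared singular values by at most the sum of the first `q̂` of them.
-/

open Finset in
theorem sum_mul_le_sum_of_threshold {ι : Type*} [Fintype ι] (S : Finset ι) {r d : ι → ℝ}
    {t : ℝ} (ht : 0 ≤ t) (hS : ∀ i ∈ S, t ≤ d i) (hSc : ∀ i ∉ S, d i ≤ t)
    (hr0 : ∀ i, 0 ≤ r i) (hr1 : ∀ i, r i ≤ 1) (hr : ∑ i, r i ≤ #S) :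
    ∑ i, r i * d i ≤ ∑ i ∈ S, d i := by
  classical
  have hpt : ∀ i, (r i - if i ∈ S then 1 else 0) * d i ≤ (r i - if i ∈ S then 1 else 0) * t := by
    intro i
    split_ifs with hi
    · exact mul_le_mul_of_nonpos_left (hS i hi) (by linarith [hr1 i])
    · simpa using mul_le_mul_of_nonneg_left (hSc i hi) (hr0 i)
  have hsum := sum_le_sum fun i (_ : i ∈ univ) => hpt i
  simp only [sub_mul, sum_sub_distrib, ite_mul, one_mul, zero_mul, sum_ite_mem, univ_inter,
    ← sum_mul, sum_const, nsmul_eq_mul] at hsum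
  nlinarith

namespace Matrix

theorem diag_mem_Icc_of_transpose_eq_of_mul_self_eq {n : Type*} [Fintype n]
    {N : Matrix n n ℝ} (hsymm : Nᵀ = N) (hidem : N * N = N) (i : n) : N i i ∈ Set.Icc 0 1 := by
  have hsq : N i i = ∑ j, N i j ^ 2 := by
    conv_lhs => rw [← hidem, mul_apply]
    refine Finset.sum_congr rfl fun j _ => ?_
    rw [sq, ← hsymm, transpose_apply, hsymm]
  have h0 : 0 ≤ N i i := hsq ▸ Finset.sum_nonneg fun j _ => sq_nonneg _
  have hle : N i i ^ 2 ≤ N i i :=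
    hsq ▸ Finset.single_le_sum (fun j _ => sq_nonneg (N i j)) (Finset.mem_univ i)
  exact ⟨h0, by nlinarith⟩

open Finset in
theorem trace_mul_diagonal_le_of_antitone {q k : ℕ} (hk : k ≤ q)
    {N : Matrix (Fin q) (Fin q) ℝ} (hsymm : Nᵀ = N) (hidem : N * N = N) (htr : N.trace = k)
    {d : ℕ → ℝ} (hd : Antitone d) (hdk : 0 ≤ d k) :
    (N * diagonal fun i : Fin q => d i).trace ≤ ∑ i : Fin k, d i := by
  set S := univ.map (Fin.castLEEmb hk)
  have hmem : ∀ i : Fin q, i ∈ S ↔ (i : ℕ) < k := fun i =>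
    ⟨fun h => by obtain ⟨a, -, rfl⟩ := mem_map.mp h; simp,
     fun h => mem_map.mpr ⟨⟨i, h⟩, mem_univ _, rfl⟩⟩
  have hdiag := diag_mem_Icc_of_transpose_eq_of_mul_self_eq hsymm hidem
  calc (N * diagonal fun i : Fin q => d i).trace = ∑ i, N i i * d i := by
        simp [trace, mul_diagonal]
    _ ≤ ∑ i ∈ S, d i :=
      sum_mul_le_sum_of_threshold S hdk (fun i hi => hd ((hmem i).mp hi).le)
        (fun i hi => hd (not_lt.mp (mt (hmem i).mpr hi))) (fun i => (hdiag i).1)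
        (fun i => (hdiag i).2) (by simpa [S, trace] using htr.le)
    _ = ∑ i : Fin k, d i := by simp [S]

theorem mul_transpose_self_of_svd {q s : ℕ} {A : Matrix (Fin q) (Fin s) ℝ}
    {U : Matrix (Fin q) (Fin q) ℝ} {W : Matrix (Fin s) (Fin s) ℝ} {σ : ℕ → ℝ} (hW : Wᵀ * W = 1)
    (hSVD : A = U * (of fun (i : Fin q) (j : Fin s) => if (i : ℕ) = j then σ i else 0) * Wᵀ) :
    A * Aᵀ = U * (diagonal fun i : Fin q => if (i : ℕ) < s then σ i ^ 2 else 0) * Uᵀ := by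
  set D : Matrix (Fin q) (Fin s) ℝ := of fun i j => if (i : ℕ) = j then σ i else 0
  have hD : D * Dᵀ = diagonal fun i : Fin q => if (i : ℕ) < s then σ i ^ 2 else 0 := by
    ext i i'
    simp only [D, mul_apply, transpose_apply, of_apply, diagonal_apply, ite_mul, zero_mul,
      mul_ite, mul_zero]
    rw [Fin.sum_univ_eq_sum_range (fun j => if (i' : ℕ) = j then
      if (i : ℕ) = j then σ i * σ i' else 0 else 0) s, Finset.sum_ite_eq]
    by_cases hii : i = i'
    · simp [hii, sq]
    · simp [hii, Fin.val_ne_of_ne hii]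
  rw [hSVD, transpose_mul, transpose_mul, transpose_transpose, ← hD]
  simp only [Matrix.mul_assoc]
  rw [← Matrix.mul_assoc Wᵀ W, hW, Matrix.one_mul]

theorem trace_transpose_mul_mul_diagonal_of_eq_submatrix_castLE {q k : ℕ} (hk : k ≤ q)
    {U : Matrix (Fin q) (Fin q) ℝ} {V : Matrix (Fin q) (Fin k) ℝ} (hU : Uᵀ * U = 1)
    (hV : V = U.submatrix id (Fin.castLE hk)) (d : ℕ → ℝ) :
    (Uᵀ * (V * Vᵀ) * U * diagonal fun i : Fin q => d i).trace = ∑ i : Fin k, d i := by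
  have hUV : Uᵀ * V = (1 : Matrix (Fin q) (Fin q) ℝ).submatrix id (Fin.castLE hk) := by
    rw [hV, ← hU]; rfl
  have hsq : Uᵀ * (V * Vᵀ) * U = (Uᵀ * V) * (Uᵀ * V)ᵀ := by
    simp only [transpose_mul, transpose_transpose, Matrix.mul_assoc]
  rw [hsq, hUV, Matrix.mul_assoc, trace_mul_comm]
  simp [trace, mul_apply, one_apply, diagonal_apply]

theorem trace_transpose_mul_mul_le_of_svd {q s k : ℕ} (hk : k ≤ q)
    {A : Matrix (Fin q) (Fin s) ℝ} {U : Matrix (Fin q) (Fin q) ℝ} {W : Matrix (Fin s) (Fin s) ℝ}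
    {σ : ℕ → ℝ} (hU : Uᵀ * U = 1) (hW : Wᵀ * W = 1) (hσ0 : ∀ n, 0 ≤ σ n) (hσ : Antitone σ)
    (hSVD : A = U * (of fun (i : Fin q) (j : Fin s) => if (i : ℕ) = j then σ i else 0) * Wᵀ)
    {V : Matrix (Fin q) (Fin k) ℝ} (hV : V = U.submatrix id (Fin.castLE hk))
    {Q : Matrix (Fin q) (Fin q) ℝ} (hsymm : Qᵀ = Q) (hidem : Q * Q = Q) (htr : Q.trace = k) :
    (Aᵀ * Q * A).trace ≤ (Aᵀ * (V * Vᵀ) * A).trace := by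
  -- the squared singular values, padded with zeros beyond `s`
  set d : ℕ → ℝ := fun n => if n < s then σ n ^ 2 else 0
  have hd0 : ∀ n, 0 ≤ d n := fun n => by positivity
  have hd : Antitone d := fun m n hmn => by
    by_cases hn : n < s
    · simp only [d, if_pos hn, if_pos (hmn.trans_lt hn)]
      exact pow_le_pow_left₀ (hσ0 n) (hσ hmn) 2
    · simpa only [d, if_neg hn] using hd0 m
  have hUU : U * Uᵀ = 1 := mul_eq_one_comm.mp hU
  have htrace : ∀ M, (Aᵀ * M * A).trace = (Uᵀ * M * U * diagonal fun i : Fin q => d i).trace := by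
    intro M
    rw [trace_mul_comm, ← Matrix.mul_assoc, mul_transpose_self_of_svd hW hSVD, trace_mul_cycle,
      trace_mul_cycle]
    simp only [Matrix.mul_assoc, d]
  rw [htrace, htrace, trace_transpose_mul_mul_diagonal_of_eq_submatrix_castLE hk hU hV]
  refine trace_mul_diagonal_le_of_antitone hk ?_ ?_ ?_ hd (hd0 k)
  · simp only [transpose_mul, transpose_transpose, hsymm, Matrix.mul_assoc]
  · simp only [Matrix.mul_assoc]
    rw [← Matrix.mul_assoc U, hUU, Matrix.one_mul, ← Matrix.mul_assoc Q, hidem]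
  · rw [trace_mul_cycle, hUU, Matrix.one_mul, htr]

section Projection

variable {m n k : Type*} [Fintype m] [Fintype k]

theorem transpose_mul_eq_zero_of_forall_trace_eq_zero [Fintype n] [DecidableEq n]
    {R : Matrix m n ℝ} {P : Matrix m k ℝ} {L : Matrix n n ℝ} (hL : IsUnit L.det)
    (h : ∀ D : Matrix k n ℝ, (Rᵀ * (P * (D * L))).trace = 0) : Pᵀ * R = 0 := by
  have := h (Pᵀ * R * L⁻¹)
  rw [Matrix.mul_assoc _ L⁻¹, nonsing_inv_mul _ hL, Matrix.mul_one, ← Matrix.mul_assoc,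
    ← transpose_transpose P, ← transpose_mul, transpose_transpose] at this
  exact trace_conjTranspose_mul_self_eq_zero_iff.mp this

variable [DecidableEq k]

theorem transpose_mul_self_sub_of_transpose_mul_eq_zero {A : Matrix m n ℝ} {P : Matrix m k ℝ}
    {C : Matrix k n ℝ} {G : Matrix k k ℝ} (hG : G * (Pᵀ * P) = 1)
    (hort : Pᵀ * (A - P * C) = 0) :
    (A - P * C)ᵀ * (A - P * C) = Aᵀ * A - Aᵀ * (P * G * Pᵀ) * A := by
  have hPA : Pᵀ * A = Pᵀ * P * C := by
    rwa [Matrix.mul_sub, sub_eq_zero, ← Matrix.mul_assoc] at hort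
  have hPC : P * G * Pᵀ * A = P * C := by
    rw [Matrix.mul_assoc, hPA, ← Matrix.mul_assoc, Matrix.mul_assoc P G, hG, Matrix.mul_one]
  rw [transpose_sub, Matrix.sub_mul, transpose_mul, Matrix.mul_assoc Cᵀ, hort, Matrix.mul_zero,
    sub_zero, Matrix.mul_sub, Matrix.mul_assoc Aᵀ, hPC]

theorem transpose_mul_inv_mul_transpose {P : Matrix m k ℝ} :
    (P * (Pᵀ * P)⁻¹ * Pᵀ)ᵀ = P * (Pᵀ * P)⁻¹ * Pᵀ := by
  rw [transpose_mul, transpose_mul, transpose_transpose, transpose_nonsing_inv, transpose_mul,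
    transpose_transpose, Matrix.mul_assoc]

theorem mul_inv_mul_transpose_mul_self {P : Matrix m k ℝ} (hP : IsUnit (Pᵀ * P).det) :
    P * (Pᵀ * P)⁻¹ * Pᵀ * (P * (Pᵀ * P)⁻¹ * Pᵀ) = P * (Pᵀ * P)⁻¹ * Pᵀ := by
  simp only [← Matrix.mul_assoc]
  rw [Matrix.mul_assoc _ Pᵀ P, Matrix.mul_assoc P, nonsing_inv_mul _ hP, Matrix.mul_one]

theorem trace_mul_inv_mul_transpose {P : Matrix m k ℝ} (hP : IsUnit (Pᵀ * P).det) :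
    (P * (Pᵀ * P)⁻¹ * Pᵀ).trace = Fintype.card k := by
  rw [trace_mul_cycle, mul_nonsing_inv _ hP, trace_one]

end Projection

theorem trace_transpose_mul_self_sub_le_of_svd {q s k : ℕ} (hk : k ≤ q)
    {A : Matrix (Fin q) (Fin s) ℝ} {U : Matrix (Fin q) (Fin q) ℝ} {W : Matrix (Fin s) (Fin s) ℝ}
    {σ : ℕ → ℝ} (hU : Uᵀ * U = 1) (hW : Wᵀ * W = 1) (hσ0 : ∀ n, 0 ≤ σ n) (hσ : Antitone σ)
    (hSVD : A = U * (of fun (i : Fin q) (j : Fin s) => if (i : ℕ) = j then σ i else 0) * Wᵀ)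
    {V : Matrix (Fin q) (Fin k) ℝ} (hV : V = U.submatrix id (Fin.castLE hk))
    {P : Matrix (Fin q) (Fin k) ℝ} (hP : Function.Injective P.mulVec)
    {Ĉ C : Matrix (Fin k) (Fin s) ℝ} (hĈ : Vᵀ * (A - V * Ĉ) = 0) (hC : Pᵀ * (A - P * C) = 0) :
    ((A - V * Ĉ)ᵀ * (A - V * Ĉ)).trace ≤ ((A - P * C)ᵀ * (A - P * C)).trace := by
  have hVV : Vᵀ * V = 1 := by
    rw [hV, transpose_submatrix, ← submatrix_mul _ _ _ _ _ Function.bijective_id, hU,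
      submatrix_one _ (Fin.castLE_injective hk)]
  have hPP : IsUnit (Pᵀ * P).det :=
    (isUnit_iff_isUnit_det _).mp (PosDef.conjTranspose_mul_self P hP).isUnit
  rw [transpose_mul_self_sub_of_transpose_mul_eq_zero (G := 1) (by rw [hVV, Matrix.mul_one]) hĈ,
    transpose_mul_self_sub_of_transpose_mul_eq_zero (nonsing_inv_mul _ hPP) hC, trace_sub,
    trace_sub, Matrix.mul_one]
  gcongr
  exact trace_transpose_mul_mul_le_of_svd hk hU hW hσ0 hσ hSVD hV transpose_mul_inv_mul_transpose
    (mul_inv_mul_transpose_mul_self hPP) (by simpa using trace_mul_inv_mul_transpose hPP)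

end Matrix

section Tensor

variable {Ω T ι κ : Type*} [MeasurableSpace Ω] [MeasurableSpace T] {μ : Measure Ω}
  {τ : Measure T} [Fintype ι] [Fintype κ]

theorem MeasureTheory.L2.integrable_mul (f g : Lp ℝ 2 μ) : Integrable (fun x => f x * g x) μ := by
  simpa [mul_comm] using L2.integrable_inner (𝕜 := ℝ) f g

theorem MeasureTheory.L2.integral_prod_mul_mul [SigmaFinite μ] [SigmaFinite τ] (f f' : Lp ℝ 2 μ)
    (g g' : Lp ℝ 2 τ) :
    ∫ p, (f p.1 * f' p.1) * (g p.2 * g' p.2) ∂(μ.prod τ) = inner ℝ f f' * inner ℝ g g' := by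
  rw [integral_prod_mul (fun a => f a * f' a) (fun b => g b * g' b), L2.inner_def, L2.inner_def]
  simp [mul_comm]

theorem integral_sum_mul_sum [SigmaFinite μ] [SigmaFinite τ] (ν : ι → Lp ℝ 2 μ)
    (ψ : κ → Lp ℝ 2 τ) (G H : Matrix ι κ ℝ) :
    ∫ p, (∑ j, ∑ i, G i j * ν i p.1 * ψ j p.2) * (∑ j, ∑ i, H i j * ν i p.1 * ψ j p.2)
      ∂(μ.prod τ) = (Gᵀ * gram ℝ ν * H * gram ℝ ψ).trace := by
  have hint : ∀ i i' j j', Integrable (fun p : Ω × T =>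
      G i j * H i' j' * ((ν i p.1 * ν i' p.1) * (ψ j p.2 * ψ j' p.2))) (μ.prod τ) :=
    fun i i' j j' => (((L2.integrable_mul _ _).mul_prod (L2.integrable_mul _ _))).const_mul _
  calc _ = ∫ p, ∑ j, ∑ j', ∑ i, ∑ i',
          G i j * H i' j' * ((ν i p.1 * ν i' p.1) * (ψ j p.2 * ψ j' p.2)) ∂(μ.prod τ) := by
        congr 1; ext p
        simp only [Finset.sum_mul_sum]
        refine Finset.sum_congr rfl fun j _ => Finset.sum_congr rfl fun j' _ =>
          Finset.sum_congr rfl fun i _ => Finset.sum_congr rfl fun i' _ => by ring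
    _ = ∑ j, ∑ j', ∑ i, ∑ i', G i j * H i' j' * (inner ℝ (ν i) (ν i') * inner ℝ (ψ j) (ψ j')) := by
        simp (disch := intros; fun_prop) only [integral_finsetSum]
        simp only [integral_const_mul, L2.integral_prod_mul_mul]
    _ = _ := by
        simp only [trace, diag, mul_apply, transpose_apply, gram_apply, Finset.sum_mul]
        refine Finset.sum_congr rfl fun j _ => Finset.sum_congr rfl fun j' _ => ?_
        rw [Finset.sum_comm]
        refine Finset.sum_congr rfl fun i _ => Finset.sum_congr rfl fun i' _ => ?_
        rw [real_inner_comm (ψ j)]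
        ring

theorem integral_sum_mul_sum_of_gram_eq [SigmaFinite μ] [SigmaFinite τ] {ν : ι → Lp ℝ 2 μ}
    {ψ : κ → Lp ℝ 2 τ} {LY : Matrix ι ι ℝ} {LS : Matrix κ κ ℝ} (hMY : gram ℝ ν = LY * LYᵀ)
    (hMS : gram ℝ ψ = LS * LSᵀ) (G H : Matrix ι κ ℝ) :
    ∫ p, (∑ j, ∑ i, G i j * ν i p.1 * ψ j p.2) * (∑ j, ∑ i, H i j * ν i p.1 * ψ j p.2)
      ∂(μ.prod τ) = ((LYᵀ * G * LS)ᵀ * (LYᵀ * H * LS)).trace := by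
  rw [integral_sum_mul_sum, hMY, hMS, transpose_mul, transpose_mul, transpose_transpose,
    Matrix.mul_assoc LSᵀ, trace_mul_comm LSᵀ]
  simp only [Matrix.mul_assoc]

end Tensor

section Coefficients

variable {ι κ ρ : Type*} [Fintype ι] [Fintype κ] [Fintype ρ]

theorem sum_sum_mul_sum_mul (P : Matrix ι ρ ℝ) (D : Matrix ρ κ ℝ) (a : ι → ℝ) (b : κ → ℝ) :
    ∑ j, ∑ k, D k j * (∑ i, P i k * a i) * b j = ∑ j, ∑ i, (P * D) i j * a i * b j := by
  refine Finset.sum_congr rfl fun j _ => ?_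
  simp only [Finset.sum_mul, Finset.mul_sum, mul_apply]
  rw [Finset.sum_comm]
  exact Finset.sum_congr rfl fun i _ => Finset.sum_congr rfl fun k _ => by ring

theorem sum_sum_mul_sub_sum_sum_mul (M N : Matrix ι κ ℝ) (a : ι → ℝ) (b : κ → ℝ) :
    (∑ j, ∑ i, M i j * a i * b j) - ∑ j, ∑ i, N i j * a i * b j
      = ∑ j, ∑ i, (M - N) i j * a i * b j := by
  simp only [← Finset.sum_sub_distrib, Matrix.sub_apply, sub_mul]

end Coefficients

theorem stmt_7_general
    {q s qhat : ℕ} {Ω T : Type*} [MeasurableSpace Ω] [MeasurableSpace T]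
    (μ : Measure Ω) (τ : Measure T) [SigmaFinite μ] [SigmaFinite τ]
    (ν : Fin q → Lp ℝ 2 μ) (ψ : Fin s → Lp ℝ 2 τ)
    (LS : Matrix (Fin s) (Fin s) ℝ) (hLS : IsUnit LS.det)
    (hMS : ∀ i j, (inner ℝ (ψ i) (ψ j) : ℝ) = (LS * LSᵀ) i j)
    (LY : Matrix (Fin q) (Fin q) ℝ) (hLY : IsUnit LY.det)
    (hMY : ∀ i j, (inner ℝ (ν i) (ν j) : ℝ) = (LY * LYᵀ) i j)
    (X : Matrix (Fin q) (Fin s) ℝ)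
    -- an SVD of A = L_Yᵀ X L_S with decreasingly ordered singular values:
    (U : Matrix (Fin q) (Fin q) ℝ) (W : Matrix (Fin s) (Fin s) ℝ) (σ : ℕ → ℝ)
    (hU : Uᵀ * U = 1) (hW : Wᵀ * W = 1)
    (hσ0 : ∀ n, 0 ≤ σ n) (hσmono : ∀ m n, m ≤ n → σ n ≤ σ m)
    (hSVD : LYᵀ * X * LS
        = U * (Matrix.of fun (i : Fin q) (j : Fin s) =>
            if (i : ℕ) = (j : ℕ) then σ i else 0) * Wᵀ)
    (hqhat : qhat ≤ q)
    -- V_{q̂}: the q̂ leading left singular vectors: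
    (V : Matrix (Fin q) (Fin qhat) ℝ)
    (hV : ∀ i k, V i k = U i (Fin.castLE hqhat k))
    -- Π_{S·Ŷ} x, with coefficients Ĉ w.r.t. the basis {ν̂_k ψ_j} of S·Ŷ,
    -- characterized by residual orthogonality to S·Ŷ:
    (Chat : Matrix (Fin qhat) (Fin s) ℝ)
    (hChat : ∀ D : Matrix (Fin qhat) (Fin s) ℝ,
      ∫ p : Ω × T,
        ((∑ j, ∑ i, X i j * ν i p.1 * ψ j p.2)
          - ∑ j, ∑ k, Chat k j * (∑ i, ((LYᵀ)⁻¹ * V) i k * ν i p.1) * ψ j p.2)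
        * (∑ j, ∑ k, D k j * (∑ i, ((LYᵀ)⁻¹ * V) i k * ν i p.1) * ψ j p.2)
        ∂(μ.prod τ) = 0)
    -- an arbitrary q̂-dimensional subspace W ⊆ Y, spanned by the columns of B:
    (B : Matrix (Fin q) (Fin qhat) ℝ)
    (hB : LinearIndependent ℝ (fun k : Fin qhat => fun i : Fin q => B i k))
    -- Π_{S·W} x, with coefficients C, characterized by residual orthogonality:
    (C : Matrix (Fin qhat) (Fin s) ℝ)
    (hC : ∀ D : Matrix (Fin qhat) (Fin s) ℝ,
      ∫ p : Ω × T,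
        ((∑ j, ∑ i, X i j * ν i p.1 * ψ j p.2)
          - ∑ j, ∑ k, C k j * (∑ i, B i k * ν i p.1) * ψ j p.2)
        * (∑ j, ∑ k, D k j * (∑ i, B i k * ν i p.1) * ψ j p.2)
        ∂(μ.prod τ) = 0) :
    ∫ p : Ω × T,
        ((∑ j, ∑ i, X i j * ν i p.1 * ψ j p.2)
          - ∑ j, ∑ k, Chat k j * (∑ i, ((LYᵀ)⁻¹ * V) i k * ν i p.1) * ψ j p.2) ^ 2
        ∂(μ.prod τ)
      ≤ ∫ p : Ω × T,
        ((∑ j, ∑ i, X i j * ν i p.1 * ψ j p.2)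
          - ∑ j, ∑ k, C k j * (∑ i, B i k * ν i p.1) * ψ j p.2) ^ 2
        ∂(μ.prod τ) := by
  have hLYT : IsUnit LYᵀ.det := by rwa [det_transpose]
  have hcoeff : ∀ (P : Matrix (Fin q) (Fin qhat) ℝ) (D : Matrix (Fin qhat) (Fin s) ℝ),
      LYᵀ * (P * D) * LS = LYᵀ * P * (D * LS) := fun P D => by simp only [Matrix.mul_assoc]
  have hresid : ∀ (P : Matrix (Fin q) (Fin qhat) ℝ) (D : Matrix (Fin qhat) (Fin s) ℝ),
      LYᵀ * (X - P * D) * LS = LYᵀ * X * LS - LYᵀ * P * (D * LS) := fun P D => by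
    simp only [Matrix.mul_sub, Matrix.sub_mul, Matrix.mul_assoc]
  have hLYV : LYᵀ * ((LYᵀ)⁻¹ * V) = V := by
    rw [← Matrix.mul_assoc, mul_nonsing_inv _ hLYT, Matrix.one_mul]
  simp only [sum_sum_mul_sum_mul, sum_sum_mul_sub_sum_sum_mul, sq,
    integral_sum_mul_sum_of_gram_eq (Matrix.ext hMY) (Matrix.ext hMS), hresid, hcoeff, hLYV]
    at hChat hC ⊢
  have hinj : Function.Injective (LYᵀ * B).mulVec := by
    have hLYinj : Function.Injective LYᵀ.mulVec :=
      mulVec_injective_iff_isUnit.mpr ((isUnit_iff_isUnit_det _).mpr hLYT)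
    simpa only [Function.comp_def, mulVec_mulVec] using hLYinj.comp (mulVec_injective_iff.mpr hB)
  exact trace_transpose_mul_self_sub_le_of_svd hqhat hU hW hσ0 hσmono hSVD (Matrix.ext hV) hinj
    (transpose_mul_eq_zero_of_forall_trace_eq_zero hLS hChat)
    (transpose_mul_eq_zero_of_forall_trace_eq_zero hLS hC)

/-- Optimal low-rank bases in space. Let `x ∈ S·Y` have coefficient matrix `X`,
let `M_Y = L_Y L_Yᵀ`, `M_S = L_S L_Sᵀ` with `L_Y, L_S` invertible, and let
`V_{q̂}` consist of `q̂` leading left singular vectors of `A := L_Yᵀ X L_S`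
(encoded by a full SVD `A = U Σ Wᵀ` with decreasingly ordered nonnegative
singular values `σ`, `V_{q̂}` being the first `q̂` columns of `U`). With
`ν̂_k := ∑_i (L_Y^{-ᵀ} V_{q̂})_{ik} ν_i` and `Ŷ = span{ν̂_k}`, the space `Ŷ` is a
best-approximating `q̂`-dimensional subspace of `Y`: for every `q̂`-dimensional
subspace `W ⊆ Y` (spanned by `w_k = ∑_i B_{ik} ν_i` with linearly independent
columns `B`), the `L²((0,T)×Ω)` error of the orthogonal projection of `x` onto
`S·Ŷ` (characterized by orthogonality of the residual to `S·Ŷ`) is at most the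
error of the orthogonal projection of `x` onto `S·W`. -/
theorem stmt_7
    {q s qhat : ℕ} {Ω T : Type*} [MeasurableSpace Ω] [MeasurableSpace T]
    (μ : Measure Ω) (τ : Measure T) [SigmaFinite μ] [SigmaFinite τ]
    (ν : Fin q → Lp ℝ 2 μ) (ψ : Fin s → Lp ℝ 2 τ)
    (hν : LinearIndependent ℝ ν) (hψ : LinearIndependent ℝ ψ)
    (LS : Matrix (Fin s) (Fin s) ℝ) (hLS : IsUnit LS.det)
    (hMS : ∀ i j, (inner ℝ (ψ i) (ψ j) : ℝ) = (LS * LSᵀ) i j)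
    (LY : Matrix (Fin q) (Fin q) ℝ) (hLY : IsUnit LY.det)
    (hMY : ∀ i j, (inner ℝ (ν i) (ν j) : ℝ) = (LY * LYᵀ) i j)
    (X : Matrix (Fin q) (Fin s) ℝ)
    -- an SVD of A = L_Yᵀ X L_S with decreasingly ordered singular values:
    (U : Matrix (Fin q) (Fin q) ℝ) (W : Matrix (Fin s) (Fin s) ℝ) (σ : ℕ → ℝ)
    (hU : Uᵀ * U = 1) (hUU : U * Uᵀ = 1) (hW : Wᵀ * W = 1) (hWW : W * Wᵀ = 1)
    (hσ0 : ∀ n, 0 ≤ σ n) (hσmono : ∀ m n, m ≤ n → σ n ≤ σ m)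
    (hSVD : LYᵀ * X * LS
        = U * (Matrix.of fun (i : Fin q) (j : Fin s) =>
            if (i : ℕ) = (j : ℕ) then σ i else 0) * Wᵀ)
    (hqhat : qhat ≤ q)
    -- V_{q̂}: the q̂ leading left singular vectors:
    (V : Matrix (Fin q) (Fin qhat) ℝ)
    (hV : ∀ i k, V i k = U i (Fin.castLE hqhat k))
    -- Π_{S·Ŷ} x, with coefficients Ĉ w.r.t. the basis {ν̂_k ψ_j} of S·Ŷ,
    -- characterized by residual orthogonality to S·Ŷ:
    (Chat : Matrix (Fin qhat) (Fin s) ℝ)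
    (hChat : ∀ D : Matrix (Fin qhat) (Fin s) ℝ,
      ∫ p : Ω × T,
        ((∑ j, ∑ i, X i j * ν i p.1 * ψ j p.2)
          - ∑ j, ∑ k, Chat k j * (∑ i, ((LYᵀ)⁻¹ * V) i k * ν i p.1) * ψ j p.2)
        * (∑ j, ∑ k, D k j * (∑ i, ((LYᵀ)⁻¹ * V) i k * ν i p.1) * ψ j p.2)
        ∂(μ.prod τ) = 0)
    -- an arbitrary q̂-dimensional subspace W ⊆ Y, spanned by the columns of B:
    (B : Matrix (Fin q) (Fin qhat) ℝ)
    (hB : LinearIndependent ℝ (fun k : Fin qhat => fun i : Fin q => B i k))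
    -- Π_{S·W} x, with coefficients C, characterized by residual orthogonality:
    (C : Matrix (Fin qhat) (Fin s) ℝ)
    (hC : ∀ D : Matrix (Fin qhat) (Fin s) ℝ,
      ∫ p : Ω × T,
        ((∑ j, ∑ i, X i j * ν i p.1 * ψ j p.2)
          - ∑ j, ∑ k, C k j * (∑ i, B i k * ν i p.1) * ψ j p.2)
        * (∑ j, ∑ k, D k j * (∑ i, B i k * ν i p.1) * ψ j p.2)
        ∂(μ.prod τ) = 0) :
    ∫ p : Ω × T,
        ((∑ j, ∑ i, X i j * ν i p.1 * ψ j p.2)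
          - ∑ j, ∑ k, Chat k j * (∑ i, ((LYᵀ)⁻¹ * V) i k * ν i p.1) * ψ j p.2) ^ 2
        ∂(μ.prod τ)
      ≤ ∫ p : Ω × T,
        ((∑ j, ∑ i, X i j * ν i p.1 * ψ j p.2)
          - ∑ j, ∑ k, C k j * (∑ i, B i k * ν i p.1) * ψ j p.2) ^ 2
        ∂(μ.prod τ) :=
  stmt_7_general μ τ ν ψ LS hLS hMS LY hLY hMY X U W σ hU hW hσ0 hσmono hSVD hqhat V hV Chat hChat B
    hB C hC
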